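/- Second-order accuracy of the well-balanced quadrature: if α, β, y are smooth (C²) with α nowhere zero on [x₀, x₀+h], then Q = (1/2)(y(x₀)/α(x₀) + y(x₀+h)/α(x₀+h))·(β(x₀+h) - β(x₀))/h differs from (1/h)∫_{x₀}^{x₀+h} y(x)·β'(x)/α(x) dx by O(h²) as h → 0. -/

import Mathlib

/-! With `f = y / α`, the error is `Φ(h) / h` for the defect
`Φ(h) = (f(x₀) + f(x₀+h))/2 · (β(x₀+h) - β(x₀)) - ∫_{x₀}^{x₀+h} f β'`.
Since `Φ(0) = 0` and `Φ'(t)` is a combination of the first-order Taylor remainders of `f` and `β`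
taken at the moving endpoint `x₀ + t`, `Φ' = O(t²)`, hence `Φ = O(h³)` by the mean value
inequality. -/

open MeasureTheory intervalIntegral Asymptotics Filter Topology Metric

theorem isBigO_pow_succ_of_hasDerivAt {E : Type*} [NormedAddCommGroup E] [NormedSpace ℝ E]
    {g g' : ℝ → E} {n : ℕ} (hg : g 0 = 0) (hderiv : ∀ᶠ t in 𝓝 0, HasDerivAt g (g' t) t)
    (hg' : g' =O[𝓝 0] fun t => t ^ n) : g =O[𝓝 0] fun t => t ^ (n + 1) := by
  obtain ⟨C, hC, hCg'⟩ := hg'.exists_pos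
  obtain ⟨ε, hε, hε_ball⟩ := Metric.eventually_nhds_iff_ball.mp (hderiv.and hCg'.bound)
  refine IsBigO.of_bound C (eventually_of_mem (ball_mem_nhds 0 hε) fun t ht => ?_)
  have hsub : closedBall (0 : ℝ) ‖t‖ ⊆ ball 0 ε := closedBall_subset_ball (by simpa using ht)
  have hbound : ∀ s ∈ closedBall (0 : ℝ) ‖t‖, ‖g' s‖ ≤ C * ‖t‖ ^ n := fun s hs => by
    calc ‖g' s‖ ≤ C * ‖s ^ n‖ := (hε_ball s (hsub hs)).2
      _ ≤ C * ‖t‖ ^ n := by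
        rw [norm_pow]
        gcongr
        simpa using hs
  have := (convex_closedBall (0 : ℝ) ‖t‖).norm_image_sub_le_of_norm_hasDerivWithin_le
    (fun s hs => (hε_ball s (hsub hs)).1.hasDerivWithinAt) hbound
    (mem_closedBall_self (norm_nonneg t)) (y := t) (by simp)
  simpa [hg, norm_pow, pow_succ, mul_assoc] using this

theorem isBigO_sub_sub_deriv_mul {f : ℝ → ℝ} (hf : ContDiff ℝ 2 f) (a : ℝ) :
    (fun t => f (a + t) - f a - deriv f (a + t) * t) =O[𝓝 0] fun t => t ^ 2 := by
  have hf' : ContDiff ℝ 1 (deriv f) := hf.iterate_deriv' 1 1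
  refine isBigO_pow_succ_of_hasDerivAt (g' := fun t => -(deriv (deriv f) (a + t) * t))
    (by simp) (Eventually.of_forall fun t => ?_) ?_
  · have hft := ((hf.differentiable (by norm_num)) (a + t)).hasDerivAt.comp_const_add a t
    have hf't := ((hf'.differentiable one_ne_zero) (a + t)).hasDerivAt.comp_const_add a t
    exact ((hft.sub_const (f a)).sub (hf't.mul (hasDerivAt_id' t))).congr_deriv (by ring)
  · have hf''_bdd : (fun t => deriv (deriv f) (a + t)) =O[𝓝 0] fun _ => (1 : ℝ) :=
      (((hf'.continuous_deriv le_rfl).comp (continuous_const_add a)).tendsto 0).isBigO_one ℝ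
    simpa using (hf''_bdd.mul (isBigO_refl (fun t : ℝ => t) _)).neg_left

noncomputable def productTrapezoidDefect (f β : ℝ → ℝ) (a h : ℝ) : ℝ :=
  (f a + f (a + h)) / 2 * (β (a + h) - β a) - ∫ x in a..a + h, f x * deriv β x

theorem hasDerivAt_productTrapezoidDefect {f β : ℝ → ℝ} (hf : Differentiable ℝ f)
    (hβ : ContDiff ℝ 1 β) (a t : ℝ) :
    HasDerivAt (productTrapezoidDefect f β a)
      ((deriv f (a + t) * (β (a + t) - β a - deriv β (a + t) * t)
        - deriv β (a + t) * (f (a + t) - f a - deriv f (a + t) * t)) / 2) t := by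
  have hft := (hf (a + t)).hasDerivAt.comp_const_add a t
  have hβt := ((hβ.differentiable one_ne_zero) (a + t)).hasDerivAt.comp_const_add a t
  have hint := ((hf.continuous.mul (hβ.continuous_deriv le_rfl)).integral_hasStrictDerivAt a
    (a + t)).hasDerivAt.comp_const_add a t
  exact ((((hft.const_add (f a)).div_const 2).mul (hβt.sub_const (β a))).sub hint).congr_deriv
    (by simp only [Pi.mul_apply]; ring)

theorem productTrapezoidDefect_isBigO {f β : ℝ → ℝ} (hf : ContDiff ℝ 2 f) (hβ : ContDiff ℝ 2 β)
    (a : ℝ) : productTrapezoidDefect f β a =O[𝓝 0] fun h => h ^ 3 := by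
  have hbdd {g : ℝ → ℝ} (hg : Continuous g) : (fun t => g (a + t)) =O[𝓝 0] fun _ => (1 : ℝ) :=
    ((hg.comp (continuous_const_add a)).tendsto 0).isBigO_one ℝ
  have hf' := hbdd (hf.continuous_deriv (by norm_num))
  have hβ' := hbdd (hβ.continuous_deriv (by norm_num))
  refine isBigO_pow_succ_of_hasDerivAt (by simp [productTrapezoidDefect])
    (Eventually.of_forall (hasDerivAt_productTrapezoidDefect (hf.differentiable (by norm_num))
      (hβ.of_le (by norm_num)) a)) ?_
  simpa [div_eq_inv_mul] using (((hf'.mul (isBigO_sub_sub_deriv_mul hβ a)).sub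
    (hβ'.mul (isBigO_sub_sub_deriv_mul hf a))).const_mul_left 2⁻¹)

/-- Second-order accuracy of the well-balanced quadrature: for C² functions
α, β, y with α nowhere zero, the trapezoid-type rule
Q(h) = (1/2)(y(x₀)/α(x₀)+y(x₀+h)/α(x₀+h))·(β(x₀+h)-β(x₀))/h differs from the
exact cell average (1/h)∫_{x₀}^{x₀+h} y β'/α by O(h²) as h → 0⁺. -/
theorem stmt_11 (α β y : ℝ → ℝ)
    (hα : ContDiff ℝ 2 α) (hβ : ContDiff ℝ 2 β) (hy : ContDiff ℝ 2 y)
    (hα0 : ∀ x, α x ≠ 0) (x₀ : ℝ) :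
    (fun h : ℝ =>
        (1 / 2) * (y x₀ / α x₀ + y (x₀ + h) / α (x₀ + h))
            * (β (x₀ + h) - β x₀) / h
          - (1 / h) * ∫ x in x₀..(x₀ + h), y x * deriv β x / α x)
      =O[nhdsWithin 0 (Set.Ioi 0)] (fun h : ℝ => h ^ 2) := by
  have hdefect := productTrapezoidDefect_isBigO (hy.div hα hα0) hβ x₀
  refine ((hdefect.mul (isBigO_refl (fun h : ℝ => h⁻¹) _)).mono nhdsWithin_le_nhds).congr
    (fun h => ?_) (fun h => ?_)
  · simp only [productTrapezoidDefect, Pi.div_apply, div_mul_eq_mul_div]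
    ring
  · rcases eq_or_ne h 0 with rfl | hh
    · simp
    · field_simp
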